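/- arXiv:1910.11064 — 7 statements merged into one kernel-verified Lean document; each statement's English description precedes it below -/
import Mathlib

section
/- Let α > 0, β > 1 and γ > 0 satisfy 1 < γ·(β−1) < β+1. Consider the 2×2 real matrix M with rows (α·(γ·(β−1) − (β+1))/(β·(β−1)), −1/β) and (α·(γ·(β−1) − 1), 0), which is the Jacobian matrix of the vector field (U,V) ↦ (F(U,V), G(U,V)) at the interior equilibrium (Ū₂, V̄₂). Then both complex roots of the characteristic polynomial of M have strictly negative real part (the interior equilibrium is a sink). -/
open Polynomial

lemma charpoly_two (a b c d : ℝ) :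
    Matrix.charpoly !![a,b;c,d] = X^2 - C (a+d) * X + C (a*d - b*c) := by
  rw [Matrix.charpoly, Matrix.det_fin_two]
  simp [Matrix.charmatrix_apply_eq, Matrix.charmatrix_apply_ne]
  ring

lemma quad_root_neg (p q : ℝ) (hp : 0 < p) (hq : 0 < q) (z : ℂ)
    (hz : z^2 + (p : ℂ) * z + (q : ℂ) = 0) : z.re < 0 := by
  have hre : z.re^2 - z.im^2 + p * z.re + q = 0 := by
    have := congrArg Complex.re hz
    simpa [Complex.add_re, Complex.mul_re, pow_two, Complex.mul_im] using this
  have him : z.re * z.im + z.im * z.re + p * z.im = 0 := by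
    have := congrArg Complex.im hz
    simpa [Complex.add_im, Complex.mul_im, pow_two, Complex.mul_re] using this
  rcases eq_or_ne z.im 0 with h | h
  · -- real root: x^2 + p x + q = 0 with p,q>0 forces x<0
    rw [h] at hre
    by_contra hx
    push_neg at hx
    nlinarith [sq_nonneg z.re]
  · have : z.im * (2 * z.re + p) = 0 := by linarith [him]
    have h2 : 2 * z.re + p = 0 := by
      rcases mul_eq_zero.mp this with h' | h'
      · exact absurd h' h
      · exact h'
    linarith

/-- Rosenzweig–MacArthur model: if `1 < γ(β-1) < β+1`, both complex roots of the
characteristic polynomial of the Jacobian at the interior equilibrium have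
strictly negative real part (the interior equilibrium is a sink). -/
theorem interior_equilibrium_sink (α β γ : ℝ)
    (hα : 0 < α) (hβ : 1 < β) (hγ : 0 < γ)
    (h1 : 1 < γ * (β - 1)) (h2 : γ * (β - 1) < β + 1) :
    ∀ z : ℂ,
      Polynomial.aeval z
        (Matrix.charpoly
          (!![α * (γ * (β - 1) - (β + 1)) / (β * (β - 1)), -1 / β;
              α * (γ * (β - 1) - 1), 0])) = 0 →
      z.re < 0 := by
  intro z hz
  set a : ℝ := α * (γ * (β - 1) - (β + 1)) / (β * (β - 1)) with ha
  set b : ℝ := -1 / β with hb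
  set c : ℝ := α * (γ * (β - 1) - 1) with hc
  rw [charpoly_two a b c 0] at hz
  simp only [map_add, map_sub, map_mul, map_pow, aeval_X, aeval_C, Complex.coe_algebraMap] at hz
  have hβ0 : 0 < β := lt_trans one_pos hβ
  have hβ1 : 0 < β - 1 := by linarith
  have hp : 0 < -(a + 0) := by
    have : a < 0 := div_neg_of_neg_of_pos (by nlinarith) (by positivity)
    simpa using by linarith
  have hq : 0 < a * 0 - b * c := by
    have : b * c < 0 := mul_neg_of_neg_of_pos (by rw [hb]; exact div_neg_of_neg_of_pos (by norm_num) hβ0) (by nlinarith)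
    linarith
  have hz' : z^2 + ((-(a+0) : ℝ) : ℂ) * z + ((a * 0 - b * c : ℝ) : ℂ) = 0 := by
    push_cast
    push_cast at hz
    linear_combination hz
  exact quad_root_neg _ _ hp hq z hz'
end

section
/- Let α > 0, β > 1 and γ > 0 satisfy γ·(β−1) > β+1. Consider the 2×2 real matrix M with rows (α·(γ·(β−1) − (β+1))/(β·(β−1)), −1/β) and (α·(γ·(β−1) − 1), 0), which is the Jacobian matrix of the vector field (U,V) ↦ (F(U,V), G(U,V)) at the interior equilibrium (Ū₂, V̄₂). Then both complex roots of the characteristic polynomial of M have strictly positive real part (the interior equilibrium is a source). -/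
/-- Rosenzweig–MacArthur model: if `γ(β-1) > β+1`, both complex roots of the
characteristic polynomial of the Jacobian at the interior equilibrium have
strictly positive real part (the interior equilibrium is a source). -/
theorem interior_equilibrium_source (α β γ : ℝ)
    (hα : 0 < α) (hβ : 1 < β) (hγ : 0 < γ)
    (h1 : β + 1 < γ * (β - 1)) :
    ∀ z : ℂ,
      Polynomial.aeval z
        (Matrix.charpoly
          (!![α * (γ * (β - 1) - (β + 1)) / (β * (β - 1)), -1 / β;
              α * (γ * (β - 1) - 1), 0])) = 0 →
      0 < z.re := by
  intro z hz
  have hβ0 : (0:ℝ) < β := by linarith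
  have hβ1 : (0:ℝ) < β - 1 := by linarith
  set T : ℝ := α * (γ * (β - 1) - (β + 1)) / (β * (β - 1)) with hT
  set D : ℝ := α * (γ * (β - 1) - 1) * (1 / β) with hD
  have hTpos : 0 < T := by
    apply div_pos
    · nlinarith
    · positivity
  have hDpos : 0 < D := by
    apply mul_pos
    · nlinarith
    · positivity
  rw [Matrix.charpoly, Matrix.det_fin_two] at hz
  simp only [Matrix.charmatrix_apply, Matrix.of_apply, Matrix.cons_val', Matrix.cons_val_zero,
    Matrix.cons_val_one, Matrix.head_cons, Matrix.head_fin_const, Matrix.empty_val',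
    Matrix.cons_val_fin_one, Matrix.diagonal_apply, Matrix.one_apply, if_true, if_false,
    Fin.isValue, show ((2:Fin 2) = 1) ↔ False from by decide, iff_false, ite_false, map_add, map_sub, map_mul, map_neg, map_one,
    map_zero, Polynomial.aeval_X, Polynomial.aeval_C, Matrix.map_apply] at hz
  simp only [show ((0:Fin 2) = 1) = False from by simp, show ((1:Fin 2) = 0) = False from by simp,
    if_false, map_zero] at hz
  simp only [Complex.coe_algebraMap] at hz
  have hb : (β:ℂ) ≠ 0 := by exact_mod_cast hβ0.ne'
  have hb1 : ((β:ℂ) - 1) ≠ 0 := by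
    rw [sub_ne_zero]
    exact_mod_cast hβ.ne'
  have hz' : z ^ 2 - (T : ℂ) * z + (D : ℂ) = 0 := by
    rw [← hz, hT, hD]
    push_cast
    field_simp
    ring
  have hre := congrArg Complex.re hz'
  have him := congrArg Complex.im hz'
  simp [Complex.add_re, Complex.sub_re, Complex.mul_re, Complex.mul_im, pow_two,
    Complex.add_im, Complex.sub_im] at hre him
  -- hre : z.re*z.re - z.im*z.im - T*z.re + D = 0 (up to form)
  -- him : (z.re*z.im + z.im*z.re) - T*z.im = 0
  have key : z.im * (2 * z.re - T) = 0 := by nlinarith [him]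
  rcases mul_eq_zero.mp key with h0 | h0
  · rw [h0] at hre
    nlinarith [hre, sq_nonneg z.re]
  · have : z.re = T / 2 := by linarith
    rw [this]; positivity
end

section
/- Let α > 0, β > 1 and γ > 0 satisfy γ·(β−1) > 1. Then there exists R₀ > 0 such that for every R ≥ R₀ the triangle 𝕋_R = { (U,V) ∈ ℝ² : U ≥ 0, V ≥ 0 and β·U + V ≤ R } is positively invariant for the kinetic system: for every T ∈ (0, ∞] and every solution (U,V) of the kinetic system on [0,T) with (U(0),V(0)) ∈ 𝕋_R, one has (U(t),V(t)) ∈ 𝕋_R for all t ∈ [0,T). -/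
open Set
open scoped ENNReal

/-- Fencing lemma: if `f 0 ≤ 0` and `f' x ≤ K * f x` whenever `0 < f x ≤ c`,
then `f ≤ 0` on `[0, t]`. -/
lemma fence_nonpos {f f' : ℝ → ℝ} {t K c : ℝ} (hK : 0 < K) (hc : 0 < c)
    (hd : ∀ x ∈ Icc (0:ℝ) t, HasDerivWithinAt f (f' x) (Icc (0:ℝ) t) x)
    (h0 : f 0 ≤ 0)
    (hb : ∀ x ∈ Ico (0:ℝ) t, 0 < f x → f x ≤ c → f' x ≤ K * f x) :
    ∀ x ∈ Icc (0:ℝ) t, f x ≤ 0 := by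
  intro x hx
  have hcont : ContinuousOn f (Icc 0 t) := fun y hy => (hd y hy).continuousWithinAt
  have hder : ∀ y ∈ Ico (0:ℝ) t, HasDerivWithinAt f (f' y) (Ici y) y := by
    intro y hy
    have h1 : HasDerivWithinAt f (f' y) (Icc y t) y :=
      (hd y ⟨hy.1, hy.2.le⟩).mono (Icc_subset_Icc_left hy.1)
    rw [← Ici_inter_Iic] at h1
    exact (hasDerivWithinAt_inter (Iic_mem_nhds hy.2)).mp h1
  have key : ∀ ε : ℝ, 0 < ε → ε ≤ c * Real.exp (-(2 * K * t)) →
      f x ≤ ε * Real.exp (2 * K * x) := by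
    intro ε hε hεc
    have hB : ∀ y : ℝ, HasDerivAt (fun y => ε * Real.exp (2 * K * y))
        (ε * (2 * K * Real.exp (2 * K * y))) y := by
      intro y
      have h1 : HasDerivAt (fun y : ℝ => 2 * K * y) (2 * K) y := by
        simpa using (hasDerivAt_id y).const_mul (2 * K)
      have := (h1.exp).const_mul ε
      simpa [mul_comm] using this
    refine image_le_of_deriv_right_lt_deriv_boundary hcont hder ?_ hB ?_ hx
    · have : (0:ℝ) < ε * Real.exp (2 * K * 0) := by positivity
      linarith
    · intro y hy hfy
      have hy0 : 0 < ε * Real.exp (2 * K * y) := by positivity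
      have hfy0 : 0 < f y := hfy ▸ hy0
      have hfyc : f y ≤ c := by
        rw [hfy]
        have h1 : Real.exp (2 * K * y) ≤ Real.exp (2 * K * t) := by
          apply Real.exp_le_exp.mpr
          have h2 : (0:ℝ) ≤ 2 * K := by linarith
          nlinarith [hy.2.le]
        calc ε * Real.exp (2 * K * y) ≤ c * Real.exp (-(2 * K * t)) * Real.exp (2 * K * t) := by
              nlinarith [Real.exp_pos (2 * K * y), Real.exp_pos (2*K*t),
                mul_le_mul_of_nonneg_left h1 hε.le]
          _ = c := by rw [mul_assoc, ← Real.exp_add]; simp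
      have h2 : f' y ≤ K * f y := hb y hy hfy0 hfyc
      have h3 : K * f y < 2 * K * f y := by nlinarith
      calc f' y ≤ K * f y := h2
        _ < 2 * K * f y := h3
        _ = ε * (2 * K * Real.exp (2 * K * y)) := by rw [hfy]; ring
  by_contra hpos
  push_neg at hpos
  set ε₀ := c * Real.exp (-(2 * K * t)) with hε₀
  have hε₀pos : 0 < ε₀ := by positivity
  have hex : (0:ℝ) < Real.exp (2 * K * x) := Real.exp_pos _
  set ε := min ε₀ (f x / (2 * Real.exp (2 * K * x))) with hε
  have hεpos : 0 < ε := lt_min hε₀pos (by positivity)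
  have := key ε hεpos (min_le_left _ _)
  have h4 : ε * Real.exp (2 * K * x) ≤ f x / 2 := by
    have h5 : ε ≤ f x / (2 * Real.exp (2 * K * x)) := min_le_right _ _
    calc ε * Real.exp (2 * K * x) ≤ f x / (2 * Real.exp (2 * K * x)) * Real.exp (2 * K * x) :=
          mul_le_mul_of_nonneg_right h5 hex.le
      _ = f x / 2 := by field_simp
  linarith

/-- Rosenzweig–MacArthur kinetic system: if `γ(β-1) > 1`, there exists `R₀ > 0` such
that for every `R ≥ R₀` the triangle `{(U,V) : U ≥ 0, V ≥ 0, βU + V ≤ R}` is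
positively invariant: every solution on `[0,T)` (with `T ∈ (0,∞]`) starting in the
triangle stays in the triangle. -/
theorem triangle_positively_invariant (α β γ : ℝ)
    (hα : 0 < α) (hβ : 1 < β) (hγ : 0 < γ) (h1 : 1 < γ * (β - 1)) :
    ∃ R₀ > (0 : ℝ), ∀ R ≥ R₀, ∀ T : ℝ≥0∞, 0 < T → ∀ U V : ℝ → ℝ,
      (∀ t : ℝ, 0 ≤ t → ENNReal.ofReal t < T →
        HasDerivWithinAt U (α * U t * (γ - U t) - U t * V t / (1 + U t))
          {s : ℝ | 0 ≤ s ∧ ENNReal.ofReal s < T} t ∧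
        HasDerivWithinAt V (-(V t) + β * U t * V t / (1 + U t))
          {s : ℝ | 0 ≤ s ∧ ENNReal.ofReal s < T} t) →
      (0 ≤ U 0 ∧ 0 ≤ V 0 ∧ β * U 0 + V 0 ≤ R) →
      ∀ t : ℝ, 0 ≤ t → ENNReal.ofReal t < T →
        0 ≤ U t ∧ 0 ≤ V t ∧ β * U t + V t ≤ R := by
  have hβ0 : (0:ℝ) < β := by linarith
  refine ⟨β * (α * γ + 1)^2 / (4 * α), by positivity, ?_⟩
  intro R hR T hT U V hode h0 t ht htT
  -- restrict to the compact interval [0, t]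
  have hsub : Icc (0:ℝ) t ⊆ {s : ℝ | 0 ≤ s ∧ ENNReal.ofReal s < T} := by
    intro s hs
    exact ⟨hs.1, lt_of_le_of_lt (ENNReal.ofReal_le_ofReal hs.2) htT⟩
  have hdU : ∀ x ∈ Icc (0:ℝ) t,
      HasDerivWithinAt U (α * U x * (γ - U x) - U x * V x / (1 + U x)) (Icc (0:ℝ) t) x := by
    intro x hx
    exact ((hode x hx.1 (lt_of_le_of_lt (ENNReal.ofReal_le_ofReal hx.2) htT)).1).mono hsub
  have hdV : ∀ x ∈ Icc (0:ℝ) t,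
      HasDerivWithinAt V (-(V x) + β * U x * V x / (1 + U x)) (Icc (0:ℝ) t) x := by
    intro x hx
    exact ((hode x hx.1 (lt_of_le_of_lt (ENNReal.ofReal_le_ofReal hx.2) htT)).2).mono hsub
  -- compact bounds
  have hUc : ContinuousOn U (Icc 0 t) := fun y hy => (hdU y hy).continuousWithinAt
  have hVc : ContinuousOn V (Icc 0 t) := fun y hy => (hdV y hy).continuousWithinAt
  obtain ⟨CU, hCU⟩ := isCompact_Icc.exists_bound_of_continuousOn hUc
  obtain ⟨CV, hCV⟩ := isCompact_Icc.exists_bound_of_continuousOn hVc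
  have h0t : (0:ℝ) ∈ Icc (0:ℝ) t := ⟨le_refl _, ht⟩
  have hCU0 : 0 ≤ CU := le_trans (norm_nonneg _) (hCU 0 h0t)
  have hCV0 : 0 ≤ CV := le_trans (norm_nonneg _) (hCV 0 h0t)
  -- Step 1: U ≥ 0 on [0,t]
  have hUnn : ∀ x ∈ Icc (0:ℝ) t, 0 ≤ U x := by
    set K₁ := α * (γ + CU) + 2 * CV + 1 with hK₁def
    have hK₁ : 0 < K₁ := by positivity
    have step1 := fence_nonpos (f := fun s => -U s)
      (f' := fun s => -(α * U s * (γ - U s) - U s * V s / (1 + U s)))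
      (t := t) (K := K₁) (c := 1/2) hK₁ (by norm_num)
      (fun x hx => (hdU x hx).neg) (by simpa using h0.1) ?_
    · intro x hx
      simpa using step1 x hx
    · intro x hx hfx hfc
      set u := U x with hu
      set v := V x with hv
      have hu2 : -(1/2 : ℝ) ≤ u := by linarith
      have hu0 : u < 0 := by linarith
      have h1u : (0:ℝ) < 1 + u := by linarith
      have hvb : |v| ≤ CV := by
        have := hCV x ⟨hx.1, hx.2.le⟩; simpa [Real.norm_eq_abs] using this
      have hub : |u| ≤ CU := by
        have := hCU x ⟨hx.1, hx.2.le⟩; simpa [Real.norm_eq_abs] using this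
      have hvb' : -CV ≤ v ∧ v ≤ CV := abs_le.mp hvb
      have hub' : -CU ≤ u ∧ u ≤ CU := abs_le.mp hub
      -- the derivative factorizes
      have hfact : -(α * u * (γ - u) - u * v / (1 + u)) =
          (-u) * (α * (γ - u) - v / (1 + u)) := by ring
      rw [hfact]
      have hg : α * (γ - u) - v / (1 + u) ≤ K₁ := by
        have hdiv : -(v / (1 + u)) ≤ 2 * CV := by
          rw [neg_le, le_div_iff₀ h1u]
          nlinarith
        have : α * (γ - u) ≤ α * (γ + CU) := by nlinarith
        rw [hK₁def]
        linarith [hdiv]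
      calc (-u) * (α * (γ - u) - v / (1 + u)) ≤ (-u) * K₁ :=
            mul_le_mul_of_nonneg_left hg (by linarith)
        _ = K₁ * (-u) := by ring
  -- Step 2: V ≥ 0 on [0,t]
  have hVnn : ∀ x ∈ Icc (0:ℝ) t, 0 ≤ V x := by
    have step2 := fence_nonpos (f := fun s => -V s)
      (f' := fun s => -(-(V s) + β * U s * V s / (1 + U s)))
      (t := t) (K := β + 1) (c := 1) (by linarith) one_pos
      (fun x hx => (hdV x hx).neg) (by simpa using h0.2.1) ?_
    · intro x hx
      simpa using step2 x hx
    · intro x hx hfx hfc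
      set u := U x with hu
      set v := V x with hv
      have hu0 : 0 ≤ u := hUnn x ⟨hx.1, hx.2.le⟩
      have hv0 : v < 0 := by linarith
      have h1u : (0:ℝ) < 1 + u := by linarith
      have hd1 : u / (1 + u) ≤ 1 := by
        rw [div_le_one h1u]; linarith
      have hd0 : 0 ≤ u / (1 + u) := div_nonneg hu0 h1u.le
      have hfact : u * v / (1 + u) = (u / (1 + u)) * v := by ring
      set d := u / (1 + u) with hdd
      have : -(-v + β * (u * v / (1 + u))) ≤ (β + 1) * (-v) := by
        rw [hfact]
        nlinarith [mul_nonneg (mul_nonneg hβ0.le (sub_nonneg.mpr hd1)) (neg_nonneg.mpr hv0.le)]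
      calc -(-v + β * u * v / (1 + u)) = -(-v + β * (u * v / (1 + u))) := by ring
        _ ≤ (β + 1) * (-v) := this
  -- Step 3: βU + V ≤ R on [0,t]
  have hW : ∀ x ∈ Icc (0:ℝ) t, β * U x + V x - R ≤ 0 := by
    have hdW : ∀ x ∈ Icc (0:ℝ) t, HasDerivWithinAt (fun s => β * U s + V s - R)
        (β * (α * U x * (γ - U x) - U x * V x / (1 + U x)) +
          (-(V x) + β * U x * V x / (1 + U x))) (Icc (0:ℝ) t) x := by
      intro x hx
      exact (((hdU x hx).const_mul β).add (hdV x hx)).sub_const R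
    have step3 := fence_nonpos (f := fun s => β * U s + V s - R)
      (f' := fun x => β * (α * U x * (γ - U x) - U x * V x / (1 + U x)) +
          (-(V x) + β * U x * V x / (1 + U x)))
      (t := t) (K := 1) (c := 1) one_pos one_pos hdW (by simp; linarith [h0.2.2]) ?_
    · exact step3
    · intro x hx hfx hfc
      set u := U x with hu
      set v := V x with hv
      have hcancel : β * (α * u * (γ - u) - u * v / (1 + u)) + (-v + β * u * v / (1 + u)) =
          α * β * u * (γ - u) - v := by ring
      rw [hcancel]
      have hM : α * β * u * (γ - u) + β * u ≤ β * (α * γ + 1)^2 / (4 * α) := by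
        rw [le_div_iff₀ (by positivity : (0:ℝ) < 4 * α)]
        nlinarith [mul_nonneg hβ0.le (sq_nonneg (2 * α * u - (α * γ + 1)))]
      have hMR : α * β * u * (γ - u) + β * u ≤ R := le_trans hM hR
      nlinarith
  refine ⟨hUnn t ⟨ht, le_refl t⟩, hVnn t ⟨ht, le_refl t⟩, by linarith [hW t ⟨ht, le_refl t⟩]⟩
end

section
/- Let α > 0, β > 1 and γ > 0 satisfy γ·(β−1) > 1. Then there exists a constant Θ > 0 such that every solution (U,V) of the kinetic system defined on [0, ∞) with U(0) > 0 and V(0) > 0 satisfies liminf_{t → ∞} U(t) ≥ Θ and liminf_{t → ∞} V(t) ≥ Θ (uniform persistence: Θ does not depend on the solution). -/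
/-!
Solutions stay positive and, after a transient, are bounded by a constant `K` that depends only
on the parameters: the logistic term pushes `U` below `γ + 1`, after which `βU + V` is dissipative.

Persistence of each species then comes from one excursion principle: if `f > 0` satisfies
`f' ≥ -M f`, and satisfies `f' ≥ c f` (`c > 0`) at every time `x` after it has stayed below a
level `A` throughout `[x - T, x]`, then eventually `f ≥ A e^{-MT}`, because a stay below `A` that
lasts longer than `T` is followed by growth.
* Prey: while `U ≤ min (1/(2β)) (γ/2)` the predator decays at rate `1/2`, so within the time
  `T = 2 log (K/δ)` it falls below `δ = αγ/4`, and then the prey grows at rate `δ`.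
* Predator: choose `1/(β-1) < u₀ < γ`, possible as `γ(β-1) > 1`. While `V ≤ δ = α(γ-u₀)/2`, the
  prey, already bounded below by its persistence constant `θ`, grows at rate `δ` and passes `u₀`
  within time `log (u₀/θ)/δ`; beyond `u₀` we have `βU/(1+U) > 1`, so the predator grows.
-/

open Set Filter Real

section Comparison

variable {f f' : ℝ → ℝ} {a b : ℝ}

theorem continuousOn_Icc_of_hasDerivWithinAt_Ici
    (hf : ∀ x ∈ Ici a, HasDerivWithinAt f (f' x) (Ici a) x) (b : ℝ) :
    ContinuousOn f (Icc a b) :=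
  fun x hx => (hf x hx.1).continuousWithinAt.mono Icc_subset_Ici_self

theorem hasDerivWithinAt_Ici_of_le {r : ℝ}
    (hf : ∀ x ∈ Ici a, HasDerivWithinAt f (f' x) (Ici a) x) (har : a ≤ r) :
    ∀ x ∈ Ici r, HasDerivWithinAt f (f' x) (Ici r) x :=
  fun x hx => (hf x (har.trans hx)).mono (Ici_subset_Ici.2 har)

theorem le_mul_exp_of_deriv_le_mul {c : ℝ}
    (hf : ∀ x ∈ Ici a, HasDerivWithinAt f (f' x) (Ici a) x)
    (bound : ∀ x ∈ Ico a b, f' x ≤ c * f x) :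
    ∀ x ∈ Icc a b, f x ≤ f a * exp (c * (x - a)) := by
  intro x hx
  have := le_gronwallBound_of_liminf_deriv_right_le (K := c) (ε := 0)
    (continuousOn_Icc_of_hasDerivWithinAt_Ici hf b)
    (fun y hy _ hr =>
      (hasDerivWithinAt_Ici_of_le hf hy.1 y self_mem_Ici).liminf_right_slope_le hr)
    le_rfl (fun y hy => (add_zero (c * f y)).symm ▸ bound y hy) x hx
  rwa [gronwallBound_ε0] at this

theorem mul_exp_le_of_mul_le_deriv {c : ℝ}
    (hf : ∀ x ∈ Ici a, HasDerivWithinAt f (f' x) (Ici a) x)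
    (bound : ∀ x ∈ Ico a b, c * f x ≤ f' x) :
    ∀ x ∈ Icc a b, f a * exp (c * (x - a)) ≤ f x := by
  intro x hx
  have := le_mul_exp_of_deriv_le_mul (f := fun y => -f y) (f' := fun y => -f' y) (c := c)
    (fun y hy => (hf y hy).neg) (fun y hy => by linarith [bound y hy]) x hx
  linarith

theorem le_const_of_deriv_neg_of_eq {A : ℝ}
    (hf : ∀ x ∈ Ici a, HasDerivWithinAt f (f' x) (Ici a) x) (ha : f a ≤ A)
    (hA : ∀ x ∈ Ico a b, f x = A → f' x < 0) : ∀ x ∈ Icc a b, f x ≤ A :=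
  fun _ hx => image_le_of_deriv_right_lt_deriv_boundary'
    (continuousOn_Icc_of_hasDerivWithinAt_Ici hf b)
    (fun y hy => hasDerivWithinAt_Ici_of_le hf hy.1 y self_mem_Ici) ha continuousOn_const
    (fun y _ => hasDerivWithinAt_const y _ A) hA hx

theorem const_le_of_deriv_pos_of_eq {A : ℝ}
    (hf : ∀ x ∈ Ici a, HasDerivWithinAt f (f' x) (Ici a) x) (ha : A ≤ f a)
    (hA : ∀ x ∈ Ico a b, f x = A → 0 < f' x) : ∀ x ∈ Icc a b, A ≤ f x :=
  fun _ hx => image_le_of_deriv_right_lt_deriv_boundary' continuousOn_const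
    (fun y _ => hasDerivWithinAt_const y _ A) ha
    (continuousOn_Icc_of_hasDerivWithinAt_Ici hf b)
    (fun y hy => hasDerivWithinAt_Ici_of_le hf hy.1 y self_mem_Ici)
    (fun y hy h => hA y hy h.symm) hx

theorem pos_of_neg_mul_le_deriv {L : ℝ}
    (hf : ∀ x ∈ Ici a, HasDerivWithinAt f (f' x) (Ici a) x) (ha : 0 < f a)
    (bound : ∀ x ∈ Ico a b, 0 < f x → -L * f x ≤ f' x) : ∀ x ∈ Icc a b, 0 < f x := by
  -- compare with the subsolution `f a * exp (-(L + 1) * (x - a))`, which decays strictly faster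
  set B : ℝ → ℝ := fun x => f a * exp (-(L + 1) * (x - a))
  have hB : ∀ x, HasDerivAt B (-(L + 1) * B x) x := fun x =>
    ((((hasDerivAt_id' x).sub_const a).const_mul (-(L + 1))).exp.const_mul (f a)).congr_deriv
      (by ring)
  intro x hx
  refine lt_of_lt_of_le (by positivity) (image_le_of_deriv_right_lt_deriv_boundary'
    (fun y _ => (hB y).continuousAt.continuousWithinAt) (fun y _ => (hB y).hasDerivWithinAt)
    (by simp [B]) (continuousOn_Icc_of_hasDerivWithinAt_Ici hf b)
    (fun y hy => hasDerivWithinAt_Ici_of_le hf hy.1 y self_mem_Ici) ?_ hx)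
  intro y hy hBy
  have hBpos : 0 < B y := by positivity
  have := bound y hy (hBy ▸ hBpos)
  rw [← hBy] at this
  linarith

theorem exists_le_of_deriv_le_neg {A ρ : ℝ} (hρ : 0 < ρ)
    (hf : ∀ x ∈ Ici a, HasDerivWithinAt f (f' x) (Ici a) x)
    (hder : ∀ x ∈ Ici a, A ≤ f x → f' x ≤ -ρ) : ∃ s ∈ Ici a, f s ≤ A := by
  by_contra! hgt
  set b := a + (f a - A) / ρ
  have hab : a ≤ b :=
    le_add_of_nonneg_right (div_nonneg (sub_nonneg.2 (hgt a self_mem_Ici).le) hρ.le)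
  have hlin := le_gronwallBound_of_liminf_deriv_right_le (K := 0) (ε := -ρ)
    (continuousOn_Icc_of_hasDerivWithinAt_Ici hf b)
    (fun y hy _ hr =>
      (hasDerivWithinAt_Ici_of_le hf hy.1 y self_mem_Ici).liminf_right_slope_le hr)
    le_rfl (fun y hy => by simpa using hder y hy.1 (hgt y hy.1).le) b ⟨hab, le_rfl⟩
  rw [gronwallBound_K0] at hlin
  have : f a + -ρ * (b - a) = A := by simp only [b]; field_simp; ring
  exact (hgt b hab).not_ge (hlin.trans this.le)

theorem eventually_le_of_deriv_le_neg {A ρ : ℝ} (hρ : 0 < ρ)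
    (hf : ∀ x ∈ Ici a, HasDerivWithinAt f (f' x) (Ici a) x)
    (hder : ∀ x ∈ Ici a, A ≤ f x → f' x ≤ -ρ) : ∀ᶠ x in atTop, f x ≤ A := by
  obtain ⟨s, hs, hfs⟩ := exists_le_of_deriv_le_neg hρ hf hder
  filter_upwards [eventually_ge_atTop s] with x hx
  exact le_const_of_deriv_neg_of_eq (hasDerivWithinAt_Ici_of_le hf hs) hfs
    (fun y hy hy' => (hder y (hs.trans hy.1) hy'.ge).trans_lt (neg_neg_of_pos hρ))
    x ⟨hx, le_rfl⟩

theorem exists_le_of_mul_le_deriv {A c : ℝ} (hc : 0 < c)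
    (hf : ∀ x ∈ Ici a, HasDerivWithinAt f (f' x) (Ici a) x) (ha : 0 < f a)
    (bound : ∀ x ∈ Ici a, c * f x ≤ f' x) : ∃ x ∈ Ici a, A ≤ f x := by
  have hexp : Tendsto (fun x => f a * exp (c * (x - a))) atTop atTop :=
    (tendsto_exp_atTop.comp ((tendsto_id.atTop_add tendsto_const_nhds).const_mul_atTop hc)
      ).const_mul_atTop ha
  obtain ⟨x, hAx, hax⟩ := ((hexp.eventually_ge_atTop A).and (eventually_ge_atTop a)).exists
  exact ⟨x, hax,
    hAx.trans (mul_exp_le_of_mul_le_deriv hf (fun y hy => bound y hy.1) x ⟨hax, le_rfl⟩)⟩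

theorem exists_last_eq_of_lt {A t : ℝ} (hat : a ≤ t) (hf : ContinuousOn f (Icc a t))
    (ha : A ≤ f a) (ht : f t < A) : ∃ r ∈ Ico a t, f r = A ∧ ∀ x ∈ Ioc r t, f x < A := by
  have hS : IsCompact (Icc a t ∩ f ⁻¹' Ici A) := isCompact_Icc.of_isClosed_subset
    (hf.preimage_isClosed_of_isClosed isClosed_Icc isClosed_Ici) inter_subset_left
  obtain ⟨r, ⟨hr, hAr⟩, hmax⟩ := hS.exists_isGreatest ⟨a, ⟨left_mem_Icc.2 hat, ha⟩⟩
  have hlast : ∀ x ∈ Ioc r t, f x < A := fun x hx => lt_of_not_ge fun hAx =>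
    hx.1.not_ge (hmax ⟨⟨hr.1.trans hx.1.le, hx.2⟩, hAx⟩)
  have hrt : r < t := hr.2.lt_of_ne (by rintro rfl; exact ht.not_ge hAr)
  -- by the intermediate value theorem `f` takes the value `A` on `[r, t]`, hence at `r`
  obtain ⟨c, hc, hfc⟩ := intermediate_value_Icc' hrt.le (hf.mono (Icc_subset_Icc hr.1 le_rfl))
    ⟨ht.le, hAr⟩
  have hcr : c = r := le_antisymm (hmax ⟨⟨hr.1.trans hc.1, hc.2⟩, hfc.ge⟩) hc.1
  exact ⟨r, ⟨hr.1, hrt⟩, hcr ▸ hfc, hlast⟩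

theorem mul_exp_le_of_excursion {M T r t : ℝ} (hM : 0 ≤ M) (hT : 0 ≤ T) (hrt : r ≤ t)
    (hf : ∀ x ∈ Ici r, HasDerivWithinAt f (f' x) (Ici r) x) (hr : 0 ≤ f r)
    (hdecay : ∀ x ∈ Ico r t, -M * f x ≤ f' x) (hgrow : ∀ x ∈ Ico r t, r + T ≤ x → 0 ≤ f' x) :
    f r * exp (-M * T) ≤ f t := by
  rcases le_total t (r + T) with htT | hTt
  · calc f r * exp (-M * T) ≤ f r * exp (-M * (t - r)) :=
          mul_le_mul_of_nonneg_left (exp_le_exp.2 (by nlinarith)) hr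
      _ ≤ f t := mul_exp_le_of_mul_le_deriv hf hdecay t ⟨hrt, le_rfl⟩
  · calc f r * exp (-M * T) = f r * exp (-M * (r + T - r)) := by ring_nf
      _ ≤ f (r + T) := mul_exp_le_of_mul_le_deriv hf (b := r + T)
          (fun x hx => hdecay x ⟨hx.1, hx.2.trans_le hTt⟩) _ ⟨le_add_of_nonneg_right hT, le_rfl⟩
      _ ≤ f t := by
          simpa using mul_exp_le_of_mul_le_deriv (c := 0)
            (hasDerivWithinAt_Ici_of_le hf (le_add_of_nonneg_right hT))
            (fun x hx => by
              simpa using hgrow x ⟨(le_add_of_nonneg_right hT).trans hx.1, hx.2⟩ hx.1)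
            t ⟨hTt, le_rfl⟩

theorem eventually_mul_exp_le_of_excursions {A c M T : ℝ} (hA : 0 ≤ A) (hc : 0 < c)
    (hM : 0 ≤ M) (hT : 0 ≤ T) (hf : ∀ x ∈ Ici a, HasDerivWithinAt f (f' x) (Ici a) x)
    (hpos : ∀ x ∈ Ici a, 0 < f x) (hdecay : ∀ x ∈ Ici a, -M * f x ≤ f' x)
    (hgrow : ∀ r ∈ Ici a, ∀ x, r + T ≤ x → (∀ y ∈ Icc r x, f y ≤ A) → c * f x ≤ f' x) :
    ∀ᶠ x in atTop, A * exp (-M * T) ≤ f x := by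
  have haT : a ≤ a + T := le_add_of_nonneg_right hT
  -- staying below `A` forever would force exponential growth
  obtain ⟨s, hs, hAs⟩ : ∃ s ∈ Ici a, A ≤ f s := by
    by_contra! hlt
    obtain ⟨x, hx, hAx⟩ := exists_le_of_mul_le_deriv (A := A) hc
      (hasDerivWithinAt_Ici_of_le hf haT) (hpos _ haT)
      (fun x hx => hgrow a self_mem_Ici x hx fun y hy => (hlt y hy.1).le)
    exact (hlt x (haT.trans hx)).not_ge hAx
  filter_upwards [eventually_ge_atTop s] with t hst
  rcases le_or_gt A (f t) with hAt | htA
  · exact (mul_le_of_le_one_right hA (exp_le_one_iff.2 (by nlinarith))).trans hAt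
  -- otherwise `t` lies in an excursion below `A` that started at the last time `r` with `f r = A`
  obtain ⟨r, hr, hfr, hlast⟩ := exists_last_eq_of_lt hst
    (continuousOn_Icc_of_hasDerivWithinAt_Ici (hasDerivWithinAt_Ici_of_le hf hs) t) hAs htA
  have har : a ≤ r := hs.trans hr.1
  have hle : ∀ y ∈ Icc r t, f y ≤ A := fun y hy =>
    hy.1.eq_or_lt.elim (fun h => h ▸ hfr.le) (fun h => (hlast y ⟨h, hy.2⟩).le)
  rw [← hfr]
  exact mul_exp_le_of_excursion hM hT hr.2.le (hasDerivWithinAt_Ici_of_le hf har)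
    (hpos r har).le (fun x hx => hdecay x (har.trans hx.1)) fun x hx hTx =>
      (mul_nonneg hc.le (hpos x (har.trans hx.1)).le).trans
        (hgrow r har x hTx fun y hy => hle y ⟨hy.1, hy.2.trans hx.2.le⟩)

end Comparison

namespace RosenzweigMacArthur

noncomputable def F (α γ u v : ℝ) : ℝ := α * u * (γ - u) - u * v / (1 + u)

noncomputable def G (β u v : ℝ) : ℝ := -v + β * u * v / (1 + u)

def IsSolution (α β γ : ℝ) (U V : ℝ → ℝ) : Prop :=
  ∀ t : ℝ, 0 ≤ t →
    HasDerivWithinAt U (F α γ (U t) (V t)) (Ici 0) t ∧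
    HasDerivWithinAt V (G β (U t) (V t)) (Ici 0) t

section Field

variable {α β γ u v : ℝ}

theorem neg_mul_le_F {K₁ K₂ : ℝ} (hα : 0 ≤ α) (hγ : 0 ≤ γ) (hu : 0 < u) (huK : u ≤ K₁)
    (hK₂ : 0 ≤ K₂) (hvK : v ≤ K₂) : -(α * K₁ + K₂) * u ≤ F α γ u v := by
  have hv : u * v / (1 + u) ≤ u * K₂ := by
    rw [div_le_iff₀ (by linarith)]
    nlinarith [mul_le_mul_of_nonneg_left hvK hu.le, mul_nonneg (mul_nonneg hu.le hu.le) hK₂]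
  unfold F
  nlinarith [mul_le_mul_of_nonneg_left huK (mul_nonneg hα hu.le),
    mul_nonneg (mul_nonneg hα hu.le) hγ]

theorem mul_le_F {u₀ : ℝ} (hα : 0 ≤ α) (hu : 0 < u) (huu₀ : u ≤ u₀) (hv : 0 ≤ v)
    (hvδ : v ≤ α * (γ - u₀) / 2) : α * (γ - u₀) / 2 * u ≤ F α γ u v := by
  have hv' : u * v / (1 + u) ≤ u * v := div_le_self (by positivity) (by linarith)
  unfold F
  nlinarith [mul_le_mul_of_nonneg_left hvδ hu.le,
    mul_le_mul_of_nonneg_left huu₀ (mul_nonneg hα hu.le)]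

theorem F_le_neg (hα : 0 ≤ α) (hγ : 0 ≤ γ) (hu : γ + 1 ≤ u) (hv : 0 ≤ v) :
    F α γ u v ≤ -(α * (γ + 1)) := by
  have hv' : 0 ≤ u * v / (1 + u) := by
    have : 0 ≤ u := by linarith
    positivity
  unfold F
  nlinarith [mul_le_mul_of_nonneg_left hu hα, mul_nonneg hα (by linarith : (0:ℝ) ≤ u - 1)]

theorem G_le_neg_half (hβ : 0 ≤ β) (hu : 0 ≤ u) (hβu : β * u ≤ 1 / 2) (hv : 0 ≤ v) :
    G β u v ≤ -(1 / 2) * v := by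
  have : β * u * v / (1 + u) ≤ β * u * v := div_le_self (by positivity) (by linarith)
  unfold G
  nlinarith

theorem neg_le_G (hβ : 0 ≤ β) (hu : 0 ≤ u) (hv : 0 ≤ v) : -1 * v ≤ G β u v := by
  have : 0 ≤ β * u * v / (1 + u) := by positivity
  unfold G
  linarith

theorem mul_le_G {u₀ : ℝ} (hβ : 0 ≤ β) (hu₀ : 0 ≤ u₀) (hu : u₀ ≤ u) (hv : 0 ≤ v) :
    (β * u₀ / (1 + u₀) - 1) * v ≤ G β u v := by
  have hmono : β * u₀ / (1 + u₀) ≤ β * u / (1 + u) := by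
    rw [div_le_div_iff₀ (by linarith) (by linarith)]; nlinarith
  have : G β u v = (β * u / (1 + u) - 1) * v := by unfold G; ring
  rw [this]
  exact mul_le_mul_of_nonneg_right (by linarith) hv

theorem mul_F_add_G_le (hα : 0 ≤ α) (hβ : 0 ≤ β) (hγ : 0 ≤ γ) (hu : 0 ≤ u)
    (huγ : u ≤ γ + 1) :
    β * F α γ u v + G β u v ≤ β * (γ + 1) * (α * γ + 1) - (β * u + v) := by
  have hW : β * F α γ u v + G β u v = α * β * u * (γ - u) - v := by
    unfold F G; field_simp; ring
  rw [hW]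
  nlinarith [mul_le_mul_of_nonneg_left huγ (mul_nonneg (mul_nonneg hα hβ) hγ),
    mul_nonneg (mul_nonneg hα hβ) (mul_nonneg hu hu), mul_le_mul_of_nonneg_left huγ hβ]

end Field

namespace IsSolution

variable {α β γ : ℝ} {U V : ℝ → ℝ}

theorem hasDerivWithinAt_prey (h : IsSolution α β γ U V) {a : ℝ} (ha : 0 ≤ a) :
    ∀ x ∈ Ici a, HasDerivWithinAt U (F α γ (U x) (V x)) (Ici a) x :=
  hasDerivWithinAt_Ici_of_le (fun x hx => (h x hx).1) ha

theorem hasDerivWithinAt_predator (h : IsSolution α β γ U V) {a : ℝ} (ha : 0 ≤ a) :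
    ∀ x ∈ Ici a, HasDerivWithinAt V (G β (U x) (V x)) (Ici a) x :=
  hasDerivWithinAt_Ici_of_le (fun x hx => (h x hx).2) ha

theorem prey_pos (h : IsSolution α β γ U V) (hα : 0 ≤ α) (hγ : 0 ≤ γ) (hU0 : 0 < U 0) :
    ∀ t ∈ Ici 0, 0 < U t := by
  intro t ht
  obtain ⟨B₁, hB₁⟩ := isCompact_Icc.bddAbove_image
    (continuousOn_Icc_of_hasDerivWithinAt_Ici (h.hasDerivWithinAt_prey le_rfl) t)
  obtain ⟨B₂, hB₂⟩ := isCompact_Icc.bddAbove_image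
    (continuousOn_Icc_of_hasDerivWithinAt_Ici (h.hasDerivWithinAt_predator le_rfl) t)
  refine pos_of_neg_mul_le_deriv (L := α * B₁ + max B₂ 0) (h.hasDerivWithinAt_prey le_rfl) hU0
    (fun x hx hUx => ?_) t ⟨ht, le_rfl⟩
  exact neg_mul_le_F hα hγ hUx (hB₁ (mem_image_of_mem U (Ico_subset_Icc_self hx)))
    (le_max_right B₂ 0)
    ((hB₂ (mem_image_of_mem V (Ico_subset_Icc_self hx))).trans (le_max_left _ _))

theorem predator_pos (h : IsSolution α β γ U V) (hα : 0 ≤ α) (hβ : 0 ≤ β) (hγ : 0 ≤ γ)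
    (hU0 : 0 < U 0) (hV0 : 0 < V 0) : ∀ t ∈ Ici 0, 0 < V t := fun t ht =>
  pos_of_neg_mul_le_deriv (L := 1) (h.hasDerivWithinAt_predator le_rfl) hV0
    (fun x hx hVx => neg_le_G hβ (h.prey_pos hα hγ hU0 x hx.1).le hVx.le) t ⟨ht, le_rfl⟩

theorem predator_le_mul_exp (h : IsSolution α β γ U V) (hβ : 0 ≤ β)
    (hU : ∀ t ∈ Ici 0, 0 < U t) (hV : ∀ t ∈ Ici 0, 0 < V t) {Uc r x : ℝ}
    (hβUc : β * Uc ≤ 1 / 2) (hr : 0 ≤ r) (hrx : r ≤ x) (hUc : ∀ y ∈ Icc r x, U y ≤ Uc) :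
    V x ≤ V r * exp (-(1 / 2) * (x - r)) :=
  le_mul_exp_of_deriv_le_mul (h.hasDerivWithinAt_predator hr) (fun y hy =>
    G_le_neg_half hβ (hU y (hr.trans hy.1)).le
      ((mul_le_mul_of_nonneg_left (hUc y (Ico_subset_Icc_self hy)) hβ).trans hβUc)
      (hV y (hr.trans hy.1)).le) x ⟨hrx, le_rfl⟩

theorem prey_ge_of_predator_le (h : IsSolution α β γ U V) (hα : 0 < α)
    (hU : ∀ t ∈ Ici 0, 0 < U t) (hV : ∀ t ∈ Ici 0, 0 < V t) {θ u₀ r x : ℝ} (hθ : 0 < θ)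
    (hθu₀ : θ ≤ u₀) (hu₀γ : u₀ < γ) (hr : 0 ≤ r) (hθr : θ ≤ U r)
    (hx : r + log (u₀ / θ) / (α * (γ - u₀) / 2) ≤ x)
    (hVδ : ∀ y ∈ Icc r x, V y ≤ α * (γ - u₀) / 2) : u₀ ≤ U x := by
  set δ := α * (γ - u₀) / 2
  set T := log (u₀ / θ) / δ
  have hδ : 0 < δ := by simp only [δ]; nlinarith
  have hT : 0 ≤ T := div_nonneg (log_nonneg ((one_le_div hθ).2 hθu₀)) hδ.le
  have hgrow : ∀ y ∈ Icc r x, U y ≤ u₀ → δ * U y ≤ F α γ (U y) (V y) := fun y hy hUy =>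
    mul_le_F hα.le (hU y (hr.trans hy.1)) hUy (hV y (hr.trans hy.1)).le (hVδ y hy)
  -- growing at rate `δ` from `θ`, the prey reaches `u₀` within time `T`
  obtain ⟨m, hm, hu₀m⟩ : ∃ m ∈ Icc r (r + T), u₀ ≤ U m := by
    by_contra! hlt
    have hexp := mul_exp_le_of_mul_le_deriv (h.hasDerivWithinAt_prey hr) (b := r + T)
      (fun y hy => hgrow y ⟨hy.1, hy.2.le.trans hx⟩ (hlt y (Ico_subset_Icc_self hy)).le)
      (r + T) ⟨le_add_of_nonneg_right hT, le_rfl⟩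
    have hu₀ : u₀ = θ * exp (δ * (r + T - r)) := by
      rw [add_sub_cancel_left, mul_div_cancel₀ _ hδ.ne',
        exp_log (div_pos (hθ.trans_le hθu₀) hθ)]
      field_simp
    exact (hlt (r + T) ⟨le_add_of_nonneg_right hT, le_rfl⟩).not_ge
      (hu₀.le.trans ((mul_le_mul_of_nonneg_right hθr (exp_pos _).le).trans hexp))
  -- and then stays above `u₀`, where it still grows
  refine const_le_of_deriv_pos_of_eq (h.hasDerivWithinAt_prey (hr.trans hm.1)) hu₀m
    (fun y hy hUy => ?_) x ⟨hm.2.trans hx, le_rfl⟩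
  have hy' : y ∈ Icc r x := ⟨hm.1.trans hy.1, hy.2.le⟩
  exact (mul_pos hδ (hU y (hr.trans hy'.1))).trans_le (hgrow y hy' hUy.le)

end IsSolution

theorem exists_uniform_bound {α β γ : ℝ} (hα : 0 < α) (hβ : 0 ≤ β) (hγ : 0 ≤ γ) :
    ∃ K, ∀ U V : ℝ → ℝ, IsSolution α β γ U V → 0 < U 0 → 0 < V 0 →
      ∀ᶠ t in atTop, U t ≤ K ∧ V t ≤ K := by
  refine ⟨max (γ + 1) (β * (γ + 1) * (α * γ + 1) + 1), fun U V h hU0 hV0 => ?_⟩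
  have hU := h.prey_pos hα.le hγ hU0
  have hV := h.predator_pos hα.le hβ hγ hU0 hV0
  have hUle : ∀ᶠ t in atTop, U t ≤ γ + 1 :=
    eventually_le_of_deriv_le_neg (by positivity) (h.hasDerivWithinAt_prey le_rfl)
      fun x hx hle => F_le_neg hα.le hγ hle (hV x hx).le
  obtain ⟨s, hs⟩ := eventually_atTop.1 (hUle.and (eventually_ge_atTop 0))
  have hWle : ∀ᶠ t in atTop, β * U t + V t ≤ β * (γ + 1) * (α * γ + 1) + 1 :=
    eventually_le_of_deriv_le_neg one_pos (a := s)
      (fun x hx => ((h.hasDerivWithinAt_prey (hs s le_rfl).2 x hx).const_mul β).add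
        (h.hasDerivWithinAt_predator (hs s le_rfl).2 x hx))
      fun x hx hle => by
        have := mul_F_add_G_le (v := V x) hα.le hβ hγ (hU x ((hs s le_rfl).2.trans hx)).le
          (hs x hx).1
        linarith
  filter_upwards [hUle, hWle, eventually_ge_atTop 0] with t hUt hWt ht
  exact ⟨hUt.trans (le_max_left _ _),
    le_max_of_le_right (by nlinarith [mul_nonneg hβ (hU t ht).le])⟩

theorem exists_eventually_prey_ge {α β γ : ℝ} (hα : 0 < α) (hβ : 0 < β) (hγ : 0 < γ) :
    ∃ θ > 0, ∀ U V : ℝ → ℝ, IsSolution α β γ U V → 0 < U 0 → 0 < V 0 →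
      ∀ᶠ t in atTop, θ ≤ U t := by
  obtain ⟨K, hK⟩ := exists_uniform_bound hα hβ.le hγ.le
  set u₀ := γ / 2
  set δ := α * (γ - u₀) / 2
  set K' := max K δ
  set Uc := min (1 / (2 * β)) u₀
  set T := 2 * log (K' / δ)
  have hδ : 0 < δ := by simp only [δ, u₀]; nlinarith
  have hK' : 0 < K' := hδ.trans_le (le_max_right _ _)
  have hT : 0 ≤ T := mul_nonneg zero_le_two (log_nonneg ((one_le_div hδ).2 (le_max_right _ _)))
  have hβUc : β * Uc ≤ 1 / 2 := by
    calc β * Uc ≤ β * (1 / (2 * β)) := mul_le_mul_of_nonneg_left (min_le_left _ _) hβ.le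
      _ = 1 / 2 := by field_simp
  -- `T` is the time the predator needs to decay from `K'` to `δ` at rate `1/2`
  have hK'T : K' * exp (-(1 / 2) * T) = δ := by
    rw [show -(1 / 2) * T = -log (K' / δ) by ring, exp_neg, exp_log (div_pos hK' hδ)]
    field_simp
  refine ⟨Uc * exp (-((α + 1) * K') * T), by positivity, fun U V h hU0 hV0 => ?_⟩
  have hU := h.prey_pos hα.le hγ.le hU0
  have hV := h.predator_pos hα.le hβ.le hγ.le hU0 hV0
  obtain ⟨a, ha⟩ := eventually_atTop.1 ((hK U V h hU0 hV0).and (eventually_ge_atTop 0))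
  have ha0 : 0 ≤ a := (ha a le_rfl).2
  refine eventually_mul_exp_le_of_excursions (le_min (by positivity) (by positivity)) hδ
    (by positivity) hT (h.hasDerivWithinAt_prey ha0) (fun x hx => hU x (ha0.trans hx))
    (fun x hx => ?_) (fun r hr x hx hUc => ?_)
  · have hUK := (ha x hx).1.1.trans (le_max_left K δ)
    have hVK := (ha x hx).1.2.trans (le_max_left K δ)
    simpa [add_mul] using neg_mul_le_F hα.le hγ.le (hU x (ha0.trans hx)) hUK hK'.le hVK
  · have hrx : r ≤ x := (le_add_of_nonneg_right hT).trans hx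
    have hVx : V x ≤ δ := calc
      V x ≤ V r * exp (-(1 / 2) * (x - r)) :=
        h.predator_le_mul_exp hβ.le hU hV hβUc (ha0.trans hr) hrx hUc
      _ ≤ K' * exp (-(1 / 2) * T) :=
        mul_le_mul ((ha r hr).1.2.trans (le_max_left _ _)) (exp_le_exp.2 (by linarith))
          (exp_pos _).le hK'.le
      _ = δ := hK'T
    exact mul_le_F hα.le (hU x (ha0.trans (hr.trans hrx))) ((hUc x ⟨hrx, le_rfl⟩).trans
      (min_le_right _ _)) (hV x (ha0.trans (hr.trans hrx))).le hVx

theorem exists_predator_growth_threshold {β γ : ℝ} (hβ : 1 < β) (hβγ : 1 < γ * (β - 1)) :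
    ∃ u₀, 0 < u₀ ∧ u₀ < γ ∧ 1 < β * u₀ / (1 + u₀) := by
  have hβ1 : 0 < β - 1 := by linarith
  obtain ⟨u₀, hlt, hu₀γ⟩ :=
    exists_between (show 1 / (β - 1) < γ by rw [div_lt_iff₀ hβ1]; linarith)
  have hu₀ : 0 < u₀ := (one_div_pos.2 hβ1).trans hlt
  refine ⟨u₀, hu₀, hu₀γ, ?_⟩
  rw [one_lt_div (by linarith)]
  nlinarith [(div_lt_iff₀ hβ1).1 hlt]

theorem exists_eventually_predator_ge {α β γ : ℝ} (hα : 0 < α) (hβ : 1 < β)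
    (hβγ : 1 < γ * (β - 1)) {θ : ℝ} (hθ : 0 < θ) :
    ∃ Θ > 0, ∀ U V : ℝ → ℝ, IsSolution α β γ U V → 0 < U 0 → 0 < V 0 →
      (∀ᶠ t in atTop, θ ≤ U t) → ∀ᶠ t in atTop, Θ ≤ V t := by
  obtain ⟨u₀, hu₀, hu₀γ, hgrowth⟩ := exists_predator_growth_threshold hβ hβγ
  have hγ : 0 ≤ γ := hu₀.le.trans hu₀γ.le
  set δ := α * (γ - u₀) / 2
  set η := β * u₀ / (1 + u₀) - 1
  set θ' := min θ u₀
  set T := log (u₀ / θ') / δ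
  have hδ : 0 < δ := by simp only [δ]; nlinarith
  have hη : 0 < η := sub_pos.2 hgrowth
  have hθ' : 0 < θ' := lt_min hθ hu₀
  have hT : 0 ≤ T := div_nonneg (log_nonneg ((one_le_div hθ').2 (min_le_right _ _))) hδ.le
  refine ⟨δ * exp (-1 * T), by positivity, fun U V h hU0 hV0 hUθ => ?_⟩
  have hU := h.prey_pos hα.le hγ hU0
  have hV := h.predator_pos hα.le (by linarith) hγ hU0 hV0
  obtain ⟨a, ha⟩ := eventually_atTop.1 (hUθ.and (eventually_ge_atTop 0))
  have ha0 : 0 ≤ a := (ha a le_rfl).2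
  refine eventually_mul_exp_le_of_excursions hδ.le hη zero_le_one hT
    (h.hasDerivWithinAt_predator ha0) (fun x hx => hV x (ha0.trans hx))
    (fun x hx => neg_le_G (by linarith) (hU x (ha0.trans hx)).le (hV x (ha0.trans hx)).le)
    (fun r hr x hx hVδ => ?_)
  have hu₀x := h.prey_ge_of_predator_le hα hU hV hθ' (min_le_right _ _) hu₀γ (ha0.trans hr)
    ((min_le_left _ _).trans (ha r hr).1) hx hVδ
  exact mul_le_G (by linarith) hu₀.le hu₀x (hV x (ha0.trans (hr.trans
    ((le_add_of_nonneg_right hT).trans hx)))).le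

end RosenzweigMacArthur

/-- Rosenzweig–MacArthur kinetic system: if `γ(β-1) > 1`, the system is uniformly
persistent: there is `Θ > 0` (independent of the solution) such that every solution
on `[0,∞)` with positive initial data satisfies `liminf U ≥ Θ` and `liminf V ≥ Θ`,
i.e. for every `ε > 0`, eventually `U t ≥ Θ - ε` and `V t ≥ Θ - ε`. -/
theorem uniform_persistence (α β γ : ℝ)
    (hα : 0 < α) (hβ : 1 < β) (hγ : 0 < γ) (h1 : 1 < γ * (β - 1)) :
    ∃ Θ > (0 : ℝ), ∀ U V : ℝ → ℝ,
      (∀ t : ℝ, 0 ≤ t →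
        HasDerivWithinAt U (α * U t * (γ - U t) - U t * V t / (1 + U t)) (Set.Ici 0) t ∧
        HasDerivWithinAt V (-(V t) + β * U t * V t / (1 + U t)) (Set.Ici 0) t) →
      0 < U 0 → 0 < V 0 →
      ∀ ε > (0 : ℝ),
        (∀ᶠ t in atTop, Θ - ε ≤ U t) ∧ (∀ᶠ t in atTop, Θ - ε ≤ V t) := by
  obtain ⟨θU, hθU, hprey⟩ :=
    RosenzweigMacArthur.exists_eventually_prey_ge hα (zero_lt_one.trans hβ) hγ
  obtain ⟨θV, hθV, hpred⟩ := RosenzweigMacArthur.exists_eventually_predator_ge hα hβ h1 hθU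
  refine ⟨min θU θV, lt_min hθU hθV, fun U V hsol hU0 hV0 ε hε => ⟨?_, ?_⟩⟩
  · filter_upwards [hprey U V hsol hU0 hV0] with t ht
    linarith [min_le_left θU θV]
  · filter_upwards [hpred U V hsol hU0 hV0 (hprey U V hsol hU0 hV0)] with t ht
    linarith [min_le_right θU θV]
end

section
/- Let α > 0, β > 1 and γ ≥ 1 satisfy 1 < γ·(β−1) < β+1, and let ξ > 0 satisfy α·(γ−1)/(β−1) < ξ < 4·α/(β−1)² − α·(γ−1)/(β−1). Define the Dulac function φ(U,V) = ((1+U)/U)·V^{ξ−1} on (0,∞)². Then for each η ∈ (0,1) there exists m_η > 0 such that ∂_U(φ·F)(U,V) + ∂_V(φ·G)(U,V) ≤ −m_η for all (U,V) ∈ [η, 1/η] × [η, 1/η]. -/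
/-- Dulac-type estimate for the Rosenzweig–MacArthur kinetic system: with
`φ(U,V) = ((1+U)/U)·V^(ξ-1)`, `F(U,V) = αU(γ-U) - UV/(1+U)` and
`G(U,V) = -V + βUV/(1+U)`, for every `η ∈ (0,1)` there is `m_η > 0` with
`∂_U(φF) + ∂_V(φG) ≤ -m_η` on the square `[η, 1/η]²`. -/
theorem dulac_estimate (α β γ ξ : ℝ)
    (hα : 0 < α) (hβ : 1 < β) (hγ : 1 ≤ γ)
    (h1 : 1 < γ * (β - 1)) (h2 : γ * (β - 1) < β + 1)
    (hξ0 : 0 < ξ)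
    (hξ1 : α * (γ - 1) / (β - 1) < ξ)
    (hξ2 : ξ < 4 * α / (β - 1) ^ 2 - α * (γ - 1) / (β - 1)) :
    ∀ η ∈ Set.Ioo (0 : ℝ) 1, ∃ m > (0 : ℝ),
      ∀ U V : ℝ, U ∈ Set.Icc η (1 / η) → V ∈ Set.Icc η (1 / η) →
        deriv (fun u : ℝ =>
            ((1 + u) / u * V ^ (ξ - 1)) * (α * u * (γ - u) - u * V / (1 + u))) U +
        deriv (fun v : ℝ =>
            ((1 + U) / U * v ^ (ξ - 1)) * (-v + β * U * v / (1 + U))) V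
          ≤ -m := by
  intro η hη
  obtain ⟨hη0, hη1⟩ := hη
  have hβ1 : 0 < β - 1 := by linarith
  set S := Real.sqrt (8 * α * ξ) with hSdef
  have hSsq : S ^ 2 = 8 * α * ξ := Real.sq_sqrt (by positivity)
  have hSpos : 0 < S := Real.sqrt_pos.mpr (by positivity)
  have ha : 0 ≤ α * (γ - 1) := by nlinarith
  have hs : 0 < ξ * (β - 1) := by positivity
  -- from hξ1 : α(γ-1) < ξ(β-1);  from hξ2 : ξ(β-1)² < 4α - α(γ-1)(β-1)
  have has : α * (γ - 1) < ξ * (β - 1) := by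
    have := (div_lt_iff₀ hβ1).mp hξ1
    linarith
  have hsum : (α * (γ - 1) + ξ * (β - 1)) * (β - 1) < 4 * α := by
    rw [div_sub_div _ _ (by positivity) hβ1.ne', lt_div_iff₀ (by positivity)] at hξ2
    nlinarith
  have hkey : α * (γ - 1) + ξ * (β - 1) < S := by
    nlinarith [hSsq, hSpos, ha, hs, has, hsum, mul_pos hs hβ1]
  set M := S - (α * (γ - 1) + ξ * (β - 1)) with hMdef
  have hM : 0 < M := by simp only [hMdef]; linarith
  set p := min (η ^ (ξ - 1)) ((1 / η) ^ (ξ - 1)) with hpdef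
  have hp : 0 < p :=
    lt_min (Real.rpow_pos_of_pos hη0 _) (Real.rpow_pos_of_pos (by positivity) _)
  refine ⟨M * p, mul_pos hM hp, ?_⟩
  intro U V hU hV
  have hU0 : 0 < U := lt_of_lt_of_le hη0 hU.1
  have hV0 : 0 < V := lt_of_lt_of_le hη0 hV.1
  have hU1 : (0:ℝ) < 1 + U := by linarith
  -- the U-derivative
  have hderivU : deriv (fun u : ℝ =>
      ((1 + u) / u * V ^ (ξ - 1)) * (α * u * (γ - u) - u * V / (1 + u))) U
      = V ^ (ξ - 1) * (α * (1 * (γ - U) + (1 + U) * (-1))) := by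
    have hev : (fun u : ℝ =>
        ((1 + u) / u * V ^ (ξ - 1)) * (α * u * (γ - u) - u * V / (1 + u)))
        =ᶠ[nhds U] fun u => V ^ (ξ - 1) * (α * ((1 + u) * (γ - u)) - V) := by
      filter_upwards [Ioi_mem_nhds hU0] with u hu
      have hu0 : (u:ℝ) ≠ 0 := ne_of_gt hu
      have hu' : (0:ℝ) < u := hu
      have hu1 : (1:ℝ) + u ≠ 0 := by linarith
      field_simp
    rw [hev.deriv_eq]
    have h1 : HasDerivAt (fun u : ℝ => (1 + u) * (γ - u))
        (1 * (γ - U) + (1 + U) * (-1)) U :=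
      ((hasDerivAt_id U).const_add 1).mul (((hasDerivAt_id U).const_sub γ))
    exact (((h1.const_mul α).sub_const V).const_mul _).deriv
  -- the V-derivative
  have hderivV : deriv (fun v : ℝ =>
      ((1 + U) / U * v ^ (ξ - 1)) * (-v + β * U * v / (1 + U))) V
      = (β - (1 + U) / U) * (ξ * V ^ (ξ - 1)) := by
    have hev : (fun v : ℝ =>
        ((1 + U) / U * v ^ (ξ - 1)) * (-v + β * U * v / (1 + U)))
        =ᶠ[nhds V] fun v => (β - (1 + U) / U) * v ^ ξ := by
      filter_upwards [Ioi_mem_nhds hV0] with v hv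
      have hsub : v ^ (ξ - 1) = v ^ ξ / v := by
        rw [Real.rpow_sub hv, Real.rpow_one]
      rw [hsub]
      have hv0 : (v:ℝ) ≠ 0 := ne_of_gt hv
      field_simp
      ring
    rw [hev.deriv_eq]
    exact ((Real.hasDerivAt_rpow_const (p := ξ) (Or.inl hV0.ne')).const_mul _).deriv
  rw [hderivU, hderivV]
  -- pointwise bound on the bracket
  have hAM : S ≤ 2 * α * U + ξ / U := by
    have hc : U * (ξ / U) = ξ := mul_div_cancel₀ ξ hU0.ne'
    have h4 : 8 * α * ξ ≤ (2 * α * U + ξ / U) ^ 2 := by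
      nlinarith [sq_nonneg (2 * α * U - ξ / U), hc]
    calc S ≤ Real.sqrt ((2 * α * U + ξ / U) ^ 2) := Real.sqrt_le_sqrt h4
      _ = 2 * α * U + ξ / U := Real.sqrt_sq (by positivity)
  have hh : α * (1 * (γ - U) + (1 + U) * (-1)) + (β - (1 + U) / U) * ξ ≤ -M := by
    have h1U : (1 + U) / U = 1 + 1 / U := by field_simp; ring
    have h2U : ξ / U = ξ * (1 / U) := by ring
    rw [h1U]
    rw [h2U] at hAM
    simp only [hMdef]
    linarith [hAM]
  -- bound on V^(ξ-1)
  have hPge : p ≤ V ^ (ξ - 1) := by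
    rcases le_or_gt 0 (ξ - 1) with h | h
    · exact le_trans (min_le_left _ _) (Real.rpow_le_rpow hη0.le hV.1 h)
    · exact le_trans (min_le_right _ _)
        (Real.rpow_le_rpow_of_nonpos hV0 hV.2 h.le)
  have hPpos : 0 < V ^ (ξ - 1) := Real.rpow_pos_of_pos hV0 _
  have hstep : V ^ (ξ - 1) * (α * (1 * (γ - U) + (1 + U) * (-1)))
      + (β - (1 + U) / U) * (ξ * V ^ (ξ - 1))
      = V ^ (ξ - 1) * (α * (1 * (γ - U) + (1 + U) * (-1)) + (β - (1 + U) / U) * ξ) := by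
    ring
  rw [hstep]
  calc V ^ (ξ - 1) * (α * (1 * (γ - U) + (1 + U) * (-1)) + (β - (1 + U) / U) * ξ)
      ≤ V ^ (ξ - 1) * (-M) := mul_le_mul_of_nonneg_left hh hPpos.le
    _ ≤ p * (-M) := mul_le_mul_of_nonpos_right hPge (by linarith)
    _ = -(M * p) := by ring
end

section
/- Let α > 0, β > 1 and γ > 0 satisfy γ·(β−1) > 1. Then there is no bounded solution of the kinetic system on ℝ emanating from the origin with a positive predator component: if (U,V) is a solution of the kinetic system on all of ℝ such that V(t₀) > 0 for some t₀ ∈ ℝ and (U(t), V(t)) → (0,0) as t → −∞, then (U,V) is unbounded, i.e. sup_{t ∈ ℝ} (|U(t)| + |V(t)|) = ∞. -/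
/-!
As `t → -∞` the prey `U` tends to `0`, where the predator equation `V' = r(U) V` has rate
`r(U) = -1 + βU/(1+U)` close to `-1`; a solution of such an equation that decays at `-∞` must
vanish, so `V = 0` on a half-line `(-∞, T]`. As long as `U ≥ -1` we have `r(U) ≤ β - 1`, so `V`
would stay `0` and never reach `V(t₀) > 0`; hence `U` drops below `-1`. That region is forward
invariant, because at `U = -1` the prey equation reads `U' = -α(γ+1) < 0` (with `x / 0 = 0`).
There `r(U) ≥ β - 1 > 0`: either `V` vanishes from then on and `U' ≤ -α(γ+1)` drives `U` to `-∞`,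
or `V ≠ 0` somewhere and `V² e^{-2(β-1)t}` is nondecreasing, so `|V|` grows exponentially.
-/

open Filter Topology Set Real

theorem HasDerivAt.nonneg_of_le_of_mem_Ioo {f : ℝ → ℝ} {d a b : ℝ} (hf : HasDerivAt f d b)
    (hab : a < b) (hle : ∀ x ∈ Ioo a b, f x ≤ f b) : 0 ≤ d := by
  refine ge_of_tendsto ((hasDerivAt_iff_tendsto_slope.mp hf).mono_left (nhdsLT_le_nhdsNE b)) ?_
  filter_upwards [Ioo_mem_nhdsLT hab] with x hx
  rw [slope_comm]
  exact (slope_nonneg_iff_of_le hx.2.le).2 (hle x hx)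

theorem lt_of_hasDerivAt_neg_of_eq {f f' : ℝ → ℝ} {a s t : ℝ} (hf : ∀ x, HasDerivAt f (f' x) x)
    (hlevel : ∀ x, f x = a → f' x < 0) (hs : f s < a) (hst : s ≤ t) : f t < a := by
  have hle : ∀ x ∈ Icc s t, f x ≤ a :=
    image_le_of_deriv_right_lt_deriv_boundary' (B := fun _ => a) (B' := 0)
      (fun x _ => (hf x).continuousAt.continuousWithinAt) (fun x _ => (hf x).hasDerivWithinAt)
      hs.le continuousOn_const (fun x _ => hasDerivWithinAt_const x _ a)
      (fun x _ hx => hlevel x hx)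
  refine (hle t ⟨hst, le_rfl⟩).lt_of_ne fun hta => ?_
  have hst' : s < t := hst.lt_of_ne (by rintro rfl; exact hs.ne hta)
  exact (hlevel t hta).not_ge <| (hf t).nonneg_of_le_of_mem_Ioo hst' fun x hx =>
    hta ▸ hle x (Ioo_subset_Icc_self hx)

theorem tendsto_atBot_of_hasDerivAt_le_neg {f f' : ℝ → ℝ} {m s : ℝ} (hm : 0 < m)
    (hf : ∀ t, HasDerivAt f (f' t) t) (hf' : ∀ t ∈ Ici s, f' t ≤ -m) :
    Tendsto f atTop atBot := by
  have hg : ∀ t, HasDerivAt (fun t => f t + m * t) (f' t + m) t := fun t => by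
    simpa using (hf t).fun_add ((hasDerivAt_id t).const_mul m)
  have hanti : AntitoneOn (fun t => f t + m * t) (Ici s) :=
    antitoneOn_of_hasDerivWithinAt_nonpos (convex_Ici s)
      (fun t _ => (hg t).continuousAt.continuousWithinAt) (fun t _ => (hg t).hasDerivWithinAt)
      (fun t ht => by linarith [hf' t (interior_subset ht)])
  refine tendsto_atBot_mono' atTop ?_ (tendsto_atBot_add_const_left _ (f s + m * s)
    (tendsto_neg_atTop_atBot.comp (tendsto_id.const_mul_atTop hm)))
  filter_upwards [eventually_ge_atTop s] with t ht
  have := hanti self_mem_Ici ht ht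
  simp only [Function.comp_apply, id_eq]
  linarith

section LinearODE

variable {f c : ℝ → ℝ}

theorem hasDerivAt_sq_mul_exp (hf : ∀ t, HasDerivAt f (c t * f t) t) (K t : ℝ) :
    HasDerivAt (fun r => f r ^ 2 * exp (-(2 * K) * r))
      (2 * (c t - K) * (f t ^ 2 * exp (-(2 * K) * t))) t := by
  refine (((hf t).fun_pow 2).fun_mul ((hasDerivAt_id' t).const_mul (-(2 * K))).exp).congr_deriv ?_
  push_cast
  ring

theorem antitoneOn_sq_mul_exp {D : Set ℝ} (hD : Convex ℝ D) (hf : ∀ t, HasDerivAt f (c t * f t) t)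
    {K : ℝ} (hc : ∀ t ∈ D, c t ≤ K) : AntitoneOn (fun t => f t ^ 2 * exp (-(2 * K) * t)) D :=
  antitoneOn_of_hasDerivWithinAt_nonpos hD
    (fun t _ => (hasDerivAt_sq_mul_exp hf K t).continuousAt.continuousWithinAt)
    (fun t _ => (hasDerivAt_sq_mul_exp hf K t).hasDerivWithinAt)
    (fun t ht => mul_nonpos_of_nonpos_of_nonneg (by linarith [hc t (interior_subset ht)])
      (by positivity))

theorem monotoneOn_sq_mul_exp {D : Set ℝ} (hD : Convex ℝ D) (hf : ∀ t, HasDerivAt f (c t * f t) t)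
    {K : ℝ} (hc : ∀ t ∈ D, K ≤ c t) : MonotoneOn (fun t => f t ^ 2 * exp (-(2 * K) * t)) D :=
  monotoneOn_of_hasDerivWithinAt_nonneg hD
    (fun t _ => (hasDerivAt_sq_mul_exp hf K t).continuousAt.continuousWithinAt)
    (fun t _ => (hasDerivAt_sq_mul_exp hf K t).hasDerivWithinAt)
    (fun t ht => mul_nonneg (by linarith [hc t (interior_subset ht)]) (by positivity))

theorem eq_zero_of_sq_mul_exp_nonpos {x K t : ℝ} (h : x ^ 2 * exp (-(2 * K) * t) ≤ 0) : x = 0 :=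
  pow_eq_zero_iff two_ne_zero |>.1 <|
    le_antisymm (nonpos_of_mul_nonpos_left h (exp_pos _)) (sq_nonneg x)

theorem eq_zero_of_tendsto_atBot (hf : ∀ t, HasDerivAt f (c t * f t) t) {K T : ℝ} (hK : K < 0)
    (hc : ∀ t ∈ Iic T, c t ≤ K) (hlim : Tendsto f atBot (𝓝 0)) {t : ℝ} (ht : t ≤ T) : f t = 0 := by
  have hweight : Tendsto (fun s => f s ^ 2 * exp (-(2 * K) * s)) atBot (𝓝 0) := by
    simpa using (hlim.pow 2).mul
      (tendsto_exp_atBot.comp (tendsto_id.const_mul_atBot (by linarith : 0 < -(2 * K))))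
  refine eq_zero_of_sq_mul_exp_nonpos (K := K) (t := t) (ge_of_tendsto hweight ?_)
  filter_upwards [eventually_le_atBot t] with s hs
  exact antitoneOn_sq_mul_exp (convex_Iic T) hf hc (hs.trans ht) ht hs

theorem eq_zero_of_eq_zero_of_le (hf : ∀ t, HasDerivAt f (c t * f t) t) {K a b : ℝ} (hab : a ≤ b)
    (hc : ∀ t ∈ Icc a b, c t ≤ K) (ha : f a = 0) : f b = 0 := by
  refine eq_zero_of_sq_mul_exp_nonpos (K := K) (t := b) ?_
  simpa [ha] using antitoneOn_sq_mul_exp (convex_Icc a b) hf hc (left_mem_Icc.2 hab)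
    (right_mem_Icc.2 hab) hab

theorem tendsto_abs_atTop_of_le_coeff (hf : ∀ t, HasDerivAt f (c t * f t) t) {K a : ℝ}
    (hK : 0 < K) (hc : ∀ t ∈ Ici a, K ≤ c t) (ha : f a ≠ 0) :
    Tendsto (fun t => |f t|) atTop atTop := by
  set ε := f a ^ 2 * exp (-(2 * K) * a)
  have hε : 0 < ε := by positivity
  have hsq : ∀ t ∈ Ici a, ε * exp (2 * K * t) ≤ f t ^ 2 := fun t ht => by
    calc ε * exp (2 * K * t)
        ≤ f t ^ 2 * exp (-(2 * K) * t) * exp (2 * K * t) := by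
          gcongr
          exact monotoneOn_sq_mul_exp (convex_Ici a) hf hc self_mem_Ici ht ht
      _ = f t ^ 2 := by rw [mul_assoc, ← exp_add]; simp
  have hgrow : Tendsto (fun t => f t ^ 2) atTop atTop :=
    tendsto_atTop_mono' atTop (eventually_ge_atTop a |>.mono hsq)
      ((tendsto_exp_atTop.comp (tendsto_id.const_mul_atTop (by positivity))).const_mul_atTop hε)
  simpa [Function.comp_def, sqrt_sq_eq_abs] using tendsto_sqrt_atTop.comp hgrow

end LinearODE

noncomputable def predatorRate (β u : ℝ) : ℝ := -1 + β * u / (1 + u)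

section RosenzweigMacArthur

variable {α β γ : ℝ} {U V : ℝ → ℝ}

theorem predatorRate_le (hβ : 0 ≤ β) {u : ℝ} (hu : -1 ≤ u) : predatorRate β u ≤ β - 1 := by
  rcases hu.eq_or_lt with rfl | hu
  · norm_num [predatorRate]
    linarith
  · have : β * u / (1 + u) ≤ β := by
      rw [div_le_iff₀ (by linarith)]
      nlinarith
    unfold predatorRate
    linarith

theorem le_predatorRate (hβ : 0 ≤ β) {u : ℝ} (hu : u < -1) : β - 1 ≤ predatorRate β u := by
  have : β ≤ β * u / (1 + u) := by
    rw [le_div_iff_of_neg (by linarith)]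
    nlinarith
  unfold predatorRate
  linarith

theorem hasDerivAt_predator {t : ℝ}
    (h : HasDerivAt V (-(V t) + β * U t * V t / (1 + U t)) t) :
    HasDerivAt V (predatorRate β (U t) * V t) t :=
  h.congr_deriv (by unfold predatorRate; ring)

theorem predator_eventually_eq_zero (hV : ∀ t, HasDerivAt V (predatorRate β (U t) * V t) t)
    (hU0 : Tendsto U atBot (𝓝 0)) (hV0 : Tendsto V atBot (𝓝 0)) : ∃ T, ∀ t ≤ T, V t = 0 := by
  have hrate : Tendsto (fun t => predatorRate β (U t)) atBot (𝓝 (-1)) := by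
    simpa [predatorRate] using ((tendsto_const_nhds.mul hU0).div (tendsto_const_nhds.add hU0)
      (by norm_num : (1 : ℝ) + 0 ≠ 0)).const_add (-1)
  obtain ⟨T, hT⟩ :=
    eventually_atBot.1 (hrate.eventually_le_const (by norm_num : (-1 : ℝ) < -1 / 2))
  exact ⟨T, fun t ht => eq_zero_of_tendsto_atBot hV (by norm_num) hT hV0 ht⟩

theorem exists_prey_lt_neg_one (hβ : 0 ≤ β)
    (hV : ∀ t, HasDerivAt V (predatorRate β (U t) * V t) t)
    {T t₀ : ℝ} (hT : ∀ t ≤ T, V t = 0) (ht₀ : V t₀ ≠ 0) : ∃ s, U s < -1 := by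
  by_contra! hU
  exact ht₀ <| eq_zero_of_eq_zero_of_le hV (min_le_right T t₀)
    (fun t _ => predatorRate_le hβ (hU t)) (hT _ (min_le_left T t₀))

theorem prey_lt_neg_one
    (hU : ∀ t, HasDerivAt U (α * U t * (γ - U t) - U t * V t / (1 + U t)) t)
    (hα : 0 < α) (hγ : -1 < γ) {s t : ℝ} (hs : U s < -1) (hst : s ≤ t) : U t < -1 :=
  lt_of_hasDerivAt_neg_of_eq hU (fun x hx => by
    rw [hx]
    norm_num
    exact mul_pos hα (by linarith)) hs hst

theorem tendsto_prey_atBot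
    (hU : ∀ t, HasDerivAt U (α * U t * (γ - U t) - U t * V t / (1 + U t)) t)
    (hα : 0 < α) (hγ : -1 < γ) {s : ℝ} (hs : ∀ t ∈ Ici s, U t ≤ -1)
    (hV : ∀ t ∈ Ici s, V t = 0) : Tendsto U atTop atBot := by
  refine tendsto_atBot_of_hasDerivAt_le_neg (s := s) (mul_pos hα (by linarith : 0 < γ + 1)) hU
    fun t ht => ?_
  rw [hV t ht, mul_zero, zero_div, sub_zero]
  have hUt := hs t ht
  have : 0 ≤ α * ((-1 - U t) * (γ + 1 - U t)) := by
    apply mul_nonneg hα.le (mul_nonneg _ _) <;> linarith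
  linarith

end RosenzweigMacArthur

theorem no_bounded_orbit_from_origin_general (α β γ : ℝ)
    (hα : 0 < α) (hβ : 1 < β) (hγ : 0 < γ) :
    ∀ U V : ℝ → ℝ,
      (∀ t : ℝ, HasDerivAt U (α * U t * (γ - U t) - U t * V t / (1 + U t)) t ∧
        HasDerivAt V (-(V t) + β * U t * V t / (1 + U t)) t) →
      (∃ t₀ : ℝ, 0 < V t₀) →
      Tendsto (fun t => (U t, V t)) atBot (nhds ((0, 0) : ℝ × ℝ)) →
      ∀ M : ℝ, ∃ t : ℝ, M < |U t| + |V t| := by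
  intro U V hUV ⟨t₀, ht₀⟩ hlim M
  have hU t := (hUV t).1
  have hV t := hasDerivAt_predator (hUV t).2
  obtain ⟨T, hT⟩ := predator_eventually_eq_zero hV hlim.fst_nhds hlim.snd_nhds
  obtain ⟨s, hs⟩ := exists_prey_lt_neg_one (by linarith) hV hT ht₀.ne'
  have hprey : ∀ t ∈ Ici s, U t < -1 := fun t ht => prey_lt_neg_one hU hα (by linarith) hs ht
  have hunbounded : Tendsto (fun t => |U t| + |V t|) atTop atTop := by
    by_cases hV0 : ∀ t ∈ Ici s, V t = 0
    · have hUbot := tendsto_prey_atBot hU hα (by linarith) (fun t ht => (hprey t ht).le) hV0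
      exact (tendsto_abs_atBot_atTop.comp hUbot).atTop_add_nonneg fun t => abs_nonneg _
    · push Not at hV0
      obtain ⟨s₁, hs₁, hVs₁⟩ := hV0
      exact Tendsto.nonneg_add_atTop (fun t => abs_nonneg _)
        (tendsto_abs_atTop_of_le_coeff hV (sub_pos.2 hβ)
          (fun t ht => le_predatorRate (by linarith) (hprey t (Ici_subset_Ici.2 hs₁ ht))) hVs₁)
  exact (hunbounded.eventually_gt_atTop M).exists

/-- Rosenzweig–MacArthur kinetic system: if `γ(β-1) > 1`, there is no bounded entire
solution emanating from the origin with a positive predator component: any entire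
solution with `V(t₀) > 0` for some `t₀` and `(U,V)(t) → (0,0)` as `t → -∞` is
unbounded. -/
theorem no_bounded_orbit_from_origin (α β γ : ℝ)
    (hα : 0 < α) (hβ : 1 < β) (hγ : 0 < γ) (h1 : 1 < γ * (β - 1)) :
    ∀ U V : ℝ → ℝ,
      (∀ t : ℝ, HasDerivAt U (α * U t * (γ - U t) - U t * V t / (1 + U t)) t ∧
        HasDerivAt V (-(V t) + β * U t * V t / (1 + U t)) t) →
      (∃ t₀ : ℝ, 0 < V t₀) →
      Tendsto (fun t => (U t, V t)) atBot (nhds ((0, 0) : ℝ × ℝ)) →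
      ∀ M : ℝ, ∃ t : ℝ, M < |U t| + |V t| :=
  no_bounded_orbit_from_origin_general α β γ hα hβ hγ
end

section
/- Let d > 0, α > 0, β > 1 and γ > 0 satisfy γ·(β−1) > 1. Then there exists c⋆ > 0 such that for every wave speed c ≥ c⋆ there is no bounded wave profile emanating from the origin with a positive predator component: there exists no wave profile (u, v) with u, v, u', v' bounded on ℝ, u(s) ≥ 0 and v(s) ≥ 0 for all s ∈ ℝ, v(s₀) > 0 for some s₀ ∈ ℝ, and (u(s), v(s), u'(s), v'(s)) → (0, 0, 0, 0) as s → −∞. -/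
/-!
Only the predator equation `v'' = c v' + v - q`, with `q = β u v / (1 + u) ∈ [0, β v]`, is
needed. If `(D - μ)(D - l) v ≥ 0`, then `η = v' - l v` satisfies `η' ≥ μ η`, so `e^{-μ s} η` is
monotone, and boundedness of `η` forces `η ≤ 0` when `μ > 0` (look at `+∞`) and `η ≥ 0` when
`μ < 0` (look at `-∞`). For `c ≥ 2 √β`, `l = μ = c / 2` gives `v' ≤ (c / 2) v` on all of `ℝ`,
so `v` is positive on a left half-line once it is positive somewhere. Near `-∞` the prey is
small, so `q ≤ v / 2`, and `l = c + ρ`, `μ = -ρ` with `ρ (c + ρ) ≤ 1 / 2` give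
`v' ≥ (c + ρ) v` there; the two bounds are incompatible where `v > 0`.
-/

open Filter Real Set Topology

section ExponentialWeight

variable {f f' : ℝ → ℝ} {μ : ℝ}

theorem monotoneOn_exp_mul_of_mul_le_deriv {D : Set ℝ} (hD : Convex ℝ D)
    (hf : ∀ x ∈ D, HasDerivAt f (f' x) x) (h : ∀ x ∈ D, μ * f x ≤ f' x) :
    MonotoneOn (fun x => exp (-μ * x) * f x) D := by
  have hg : ∀ x ∈ D,
      HasDerivAt (fun x => exp (-μ * x) * f x) (exp (-μ * x) * (f' x - μ * f x)) x := by
    intro x hx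
    have hexp : HasDerivAt (fun x => exp (-μ * x)) (exp (-μ * x) * -μ) x := by
      simpa using ((hasDerivAt_id x).const_mul (-μ)).exp
    exact (hexp.mul (hf x hx)).congr_deriv (by ring)
  refine monotoneOn_of_hasDerivWithinAt_nonneg hD
    (fun x hx => (hg x hx).continuousAt.continuousWithinAt)
    (fun x hx => (hg x (interior_subset hx)).hasDerivWithinAt) fun x hx => ?_
  have := h x (interior_subset hx)
  exact mul_nonneg (exp_pos _).le (by linarith)

theorem nonpos_of_mul_le_deriv_of_le {a K : ℝ} (hμ : 0 < μ)
    (hf : ∀ x ∈ Ici a, HasDerivAt f (f' x) x) (h : ∀ x ∈ Ici a, μ * f x ≤ f' x)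
    (hK : ∀ x ∈ Ici a, f x ≤ K) : f a ≤ 0 := by
  have hmono := monotoneOn_exp_mul_of_mul_le_deriv (convex_Ici a) hf h
  have hlim : Tendsto (fun x => exp (-μ * x) * K) atTop (𝓝 0) := by
    simpa using (tendsto_exp_atBot.comp
      (tendsto_id.const_mul_atTop_of_neg (neg_lt_zero.mpr hμ))).mul_const K
  have hle : ∀ᶠ x in atTop, exp (-μ * a) * f a ≤ exp (-μ * x) * K := by
    filter_upwards [eventually_ge_atTop a] with x hx
    exact (hmono self_mem_Ici hx hx).trans
      (mul_le_mul_of_nonneg_left (hK x hx) (exp_pos _).le)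
  exact nonpos_of_mul_nonpos_right (ge_of_tendsto hlim hle) (exp_pos _)

theorem nonneg_of_mul_le_deriv_of_le {a K : ℝ} (hμ : μ < 0)
    (hf : ∀ x ∈ Iic a, HasDerivAt f (f' x) x) (h : ∀ x ∈ Iic a, μ * f x ≤ f' x)
    (hK : ∀ x ∈ Iic a, K ≤ f x) : 0 ≤ f a := by
  have hmono := monotoneOn_exp_mul_of_mul_le_deriv (convex_Iic a) hf h
  have hlim : Tendsto (fun x => exp (-μ * x) * K) atBot (𝓝 0) := by
    simpa using (tendsto_exp_atBot.comp
      (tendsto_id.const_mul_atBot (neg_pos.mpr hμ))).mul_const K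
  have hle : ∀ᶠ x in atBot, exp (-μ * x) * K ≤ exp (-μ * a) * f a := by
    filter_upwards [eventually_le_atBot a] with x hx
    exact (mul_le_mul_of_nonneg_left (hK x hx) (exp_pos _).le).trans
      (hmono hx self_mem_Iic hx)
  exact nonneg_of_mul_nonneg_right (le_of_tendsto hlim hle) (exp_pos _)

theorem pos_of_deriv_le_mul {a x : ℝ} (hf : ∀ y ∈ Iic a, HasDerivAt f (f' y) y)
    (h : ∀ y ∈ Iic a, f' y ≤ μ * f y) (ha : 0 < f a) (hx : x ≤ a) : 0 < f x := by
  have hmono := monotoneOn_exp_mul_of_mul_le_deriv (f := fun y => -f y) (convex_Iic a)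
    (fun y hy => (hf y hy).neg) fun y hy => by rw [mul_neg]; exact neg_le_neg (h y hy)
  have := hmono hx self_mem_Iic hx
  simp only [mul_neg, neg_le_neg_iff] at this
  exact pos_of_mul_pos_right ((mul_pos (exp_pos _) ha).trans_le this) (exp_pos _).le

end ExponentialWeight

section SecondOrder

variable {v v' v'' : ℝ → ℝ} {l μ M a : ℝ}

theorem hasDerivAt_deriv_sub_mul (hv : ∀ s, HasDerivAt v (v' s) s)
    (hv' : ∀ s, HasDerivAt v' (v'' s) s) (s : ℝ) :
    HasDerivAt (fun s => v' s - l * v s) (v'' s - l * v' s) s :=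
  (hv' s).sub ((hv s).const_mul l)

theorem abs_deriv_sub_mul_le (hM : ∀ s, |v s| ≤ M ∧ |v' s| ≤ M) (s : ℝ) :
    |v' s - l * v s| ≤ M + |l| * M := by
  calc |v' s - l * v s| ≤ |v' s| + |l| * |v s| := by rw [← abs_mul]; exact abs_sub _ _
    _ ≤ M + |l| * M := add_le_add (hM s).2 (mul_le_mul_of_nonneg_left (hM s).1 (abs_nonneg l))

theorem deriv_le_mul_of_factor_nonneg (hμ : 0 < μ) (hv : ∀ s, HasDerivAt v (v' s) s)
    (hv' : ∀ s, HasDerivAt v' (v'' s) s) (hM : ∀ s, |v s| ≤ M ∧ |v' s| ≤ M)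
    (h : ∀ s ∈ Ici a, 0 ≤ v'' s - (l + μ) * v' s + l * μ * v s) : v' a ≤ l * v a := by
  have hη := nonpos_of_mul_le_deriv_of_le hμ
    (fun s _ => hasDerivAt_deriv_sub_mul (l := l) hv hv' s)
    (fun s hs => by linear_combination h s hs)
    fun s _ => (le_abs_self _).trans (abs_deriv_sub_mul_le hM s)
  beta_reduce at hη
  linarith

theorem mul_le_deriv_of_factor_nonneg (hμ : μ < 0) (hv : ∀ s, HasDerivAt v (v' s) s)
    (hv' : ∀ s, HasDerivAt v' (v'' s) s) (hM : ∀ s, |v s| ≤ M ∧ |v' s| ≤ M)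
    (h : ∀ s ∈ Iic a, 0 ≤ v'' s - (l + μ) * v' s + l * μ * v s) : l * v a ≤ v' a := by
  have hη := nonneg_of_mul_le_deriv_of_le hμ
    (fun s _ => hasDerivAt_deriv_sub_mul (l := l) hv hv' s)
    (fun s hs => by linear_combination h s hs)
    fun s _ => neg_le_of_abs_le (abs_deriv_sub_mul_le hM s)
  beta_reduce at hη
  linarith

end SecondOrder

theorem nonpos_of_predator_equation {v v' v'' q : ℝ → ℝ} {c M T : ℝ} (hc : 0 < c)
    (hv : ∀ s, HasDerivAt v (v' s) s) (hv' : ∀ s, HasDerivAt v' (v'' s) s)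
    (heq : ∀ s, v'' s = c * v' s + v s - q s) (hM : ∀ s, |v s| ≤ M ∧ |v' s| ≤ M)
    (hq : ∀ s, q s ≤ (1 + c ^ 2 / 4) * v s) (hqT : ∀ s ≤ T, q s ≤ v s / 2)
    (hvT : ∀ s ≤ T, 0 ≤ v s) (s₀ : ℝ) : v s₀ ≤ 0 := by
  by_contra! hs₀
  have hupper s : v' s ≤ c / 2 * v s :=
    deriv_le_mul_of_factor_nonneg (μ := c / 2) (by positivity) hv hv' hM fun t _ => by
      linarith [heq t, hq t]
  set ρ := 1 / (2 * (c + 1)) with hρ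
  have hρ0 : 0 < ρ := by positivity
  have hρc : ρ * (c + ρ) ≤ 1 / 2 := by
    have : ρ * (c + 1) = 1 / 2 := by rw [hρ]; field_simp
    have : ρ ≤ 1 := by rw [hρ, div_le_one (by positivity)]; linarith
    nlinarith
  set T₀ := min T s₀
  have hlower : (c + ρ) * v T₀ ≤ v' T₀ :=
    mul_le_deriv_of_factor_nonneg (neg_lt_zero.mpr hρ0) hv hv' hM fun t ht => by
      have htT : t ≤ T := ht.trans (min_le_left _ _)
      linarith [heq t, hqT t htT, mul_nonneg (hvT t htT) (by linarith : 0 ≤ 1 / 2 - ρ * (c + ρ))]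
  have hpos : 0 < v T₀ :=
    pos_of_deriv_le_mul (fun s _ => hv s) (fun s _ => hupper s) hs₀ (min_le_right _ _)
  nlinarith [hupper T₀]

theorem exists_forall_le_predation_le_half {β : ℝ} {u v : ℝ → ℝ} (hβ : 0 ≤ β)
    (hu : Tendsto u atBot (𝓝 0)) (hnn : ∀ s, 0 ≤ u s ∧ 0 ≤ v s) :
    ∃ T, ∀ s ≤ T, β * u s * v s / (1 + u s) ≤ v s / 2 := by
  have hsmall : ∀ᶠ s in atBot, β * u s < 1 / 2 :=
    (by simpa using hu.const_mul β : Tendsto (fun s => β * u s) atBot (𝓝 0)).eventually_lt_const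
      one_half_pos
  obtain ⟨T, hT⟩ := eventually_atBot.mp hsmall
  refine ⟨T, fun s hs => ?_⟩
  obtain ⟨hu0, hv0⟩ := hnn s
  calc β * u s * v s / (1 + u s) ≤ β * u s * v s :=
        div_le_self (by positivity) (by linarith)
    _ ≤ 1 / 2 * v s := mul_le_mul_of_nonneg_right (hT s hs).le hv0
    _ = v s / 2 := by ring

theorem no_bounded_wave_from_origin_general (d α β γ : ℝ)
    (hβ : 1 < β) :
    ∃ cstar > (0 : ℝ), ∀ c ≥ cstar,
      ¬ ∃ u v : ℝ → ℝ, ContDiff ℝ 2 u ∧ ContDiff ℝ 2 v ∧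
        (∀ s : ℝ,
          c * deriv u s =
            d * deriv (deriv u) s + α * u s * (γ - u s) - u s * v s / (1 + u s) ∧
          c * deriv v s =
            deriv (deriv v) s - v s + β * u s * v s / (1 + u s)) ∧
        (∃ M : ℝ, ∀ s : ℝ,
          |u s| ≤ M ∧ |v s| ≤ M ∧ |deriv u s| ≤ M ∧ |deriv v s| ≤ M) ∧
        (∀ s : ℝ, 0 ≤ u s ∧ 0 ≤ v s) ∧
        (∃ s₀ : ℝ, 0 < v s₀) ∧
        Tendsto (fun s => (u s, v s, deriv u s, deriv v s)) atBot
          (nhds ((0, 0, 0, 0) : ℝ × ℝ × ℝ × ℝ)) := by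
  have hβ0 : 0 < β := one_pos.trans hβ
  refine ⟨2 * √β, by positivity, fun c hc => ?_⟩
  rintro ⟨u, v, -, hv2, heq, ⟨M, hM⟩, hnn, ⟨s₀, hs₀⟩, hlim⟩
  have hc0 : 0 < c := lt_of_lt_of_le (by positivity) hc
  have hβc : 4 * β ≤ c ^ 2 := by nlinarith [sq_sqrt hβ0.le, sqrt_nonneg β]
  have hpred s : β * u s * v s / (1 + u s) ≤ (1 + c ^ 2 / 4) * v s := by
    obtain ⟨hu0, hv0⟩ := hnn s
    rw [div_le_iff₀ (by linarith)]
    nlinarith [mul_nonneg (mul_nonneg hβ0.le hu0) hv0, mul_nonneg hu0 hv0]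
  obtain ⟨T, hT⟩ := exists_forall_le_predation_le_half hβ0.le
    ((continuous_fst.tendsto _).comp hlim : Tendsto u atBot (𝓝 0)) hnn
  refine (nonpos_of_predator_equation hc0 (fun s => (hv2.differentiable two_ne_zero s).hasDerivAt)
    (fun s => ((hv2 : ContDiff ℝ (1 + 1) v).deriv'.differentiable one_ne_zero s).hasDerivAt)
    (fun s => by linarith [(heq s).2]) (fun s => ⟨(hM s).2.1, (hM s).2.2.2⟩) hpred hT
    (fun s _ => (hnn s).2) s₀).not_gt hs₀

/-- Diffusive Rosenzweig–MacArthur model: if `γ(β-1) > 1`, then for all large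
enough wave speeds `c` there is no bounded nonnegative wave profile with a positive
predator component emanating from the origin (i.e. with
`(u, v, u', v') → (0,0,0,0)` as `s → -∞`). -/
theorem no_bounded_wave_from_origin (d α β γ : ℝ)
    (hd : 0 < d) (hα : 0 < α) (hβ : 1 < β) (hγ : 0 < γ)
    (h1 : 1 < γ * (β - 1)) :
    ∃ cstar > (0 : ℝ), ∀ c ≥ cstar,
      ¬ ∃ u v : ℝ → ℝ, ContDiff ℝ 2 u ∧ ContDiff ℝ 2 v ∧
        (∀ s : ℝ,
          c * deriv u s =
            d * deriv (deriv u) s + α * u s * (γ - u s) - u s * v s / (1 + u s) ∧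
          c * deriv v s =
            deriv (deriv v) s - v s + β * u s * v s / (1 + u s)) ∧
        (∃ M : ℝ, ∀ s : ℝ,
          |u s| ≤ M ∧ |v s| ≤ M ∧ |deriv u s| ≤ M ∧ |deriv v s| ≤ M) ∧
        (∀ s : ℝ, 0 ≤ u s ∧ 0 ≤ v s) ∧
        (∃ s₀ : ℝ, 0 < v s₀) ∧
        Tendsto (fun s => (u s, v s, deriv u s, deriv v s)) atBot
          (nhds ((0, 0, 0, 0) : ℝ × ℝ × ℝ × ℝ)) :=
  no_bounded_wave_from_origin_general d α β γ hβ
end
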